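/- Consider the doubling algorithm sequences defined by c_{k+1} = c_k(1 - v_kᵀu_k)⁻¹c_k, u_{k+1} = u_k + c_kF_k(I - u_kv_kᵀ)⁻¹u_k, v_{k+1} = v_k + c_k(1 - v_kᵀu_k)⁻¹F_kᵀv_k, F_{k+1} = F_k(I - u_kv_kᵀ)⁻¹F_k with c₀ = 1ᵀA⁻¹b, u₀ = A⁻¹b, v₀ = A⁻ᵀ1, F₀ = A⁻¹. If α_k := ‖u_kv_kᵀ‖₁ < 1 and β_k := ‖c_kF_k‖₁, then β_{k+1} ≤ (β_k/(1-α_k))² and α_{k+1} ≤ α_k(1 + β_k/(1-α_k))². -/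

import Mathlib

/-!
Write `N = u vᵀ`, `a = ‖N‖₁ < 1`, `b = ‖c F‖₁` and `t = (1 - vᵀu)⁻¹`. Since `|vᵀu| ≤ a`, we get
`|t| ≤ 1/(1-a)`, and the Neumann series gives `‖(I - N)⁻¹‖₁ ≤ 1/(1-a)`. The new iterates factor as
`c' F' = t · (cF)(I - N)⁻¹(cF)` and `u' v'ᵀ = (I + cF(I - N)⁻¹) N (I + t cF)`, so both bounds follow
from submultiplicativity of the column-sum norm.
-/

open Matrix

/-- ℓ¹ norm of a vector in ℝⁿ. -/
noncomputable def l1 {n : ℕ} (x : Fin n → ℝ) : ℝ := ∑ i, |x i|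

/-- Induced operator 1-norm of a real matrix (maximum column sum). -/
noncomputable def op1 {n : ℕ} (A : Matrix (Fin n) (Fin n) ℝ) : ℝ := ⨆ j, ∑ i, |A i j|

theorem NormedRing.norm_inverse_one_sub_le {R : Type*} [NormedRing R] [HasSummableGeomSeries R]
    {t : R} (ht : ‖t‖ < 1) : ‖Ring.inverse (1 - t)‖ ≤ ‖(1 : R)‖ - 1 + (1 - ‖t‖)⁻¹ := by
  rw [NormedRing.inverse_one_sub t ht]
  exact tsum_geometric_le_of_norm_lt_one t ht

theorem abs_inv_one_sub_le {s a : ℝ} (hs : |s| ≤ a) (ha : a < 1) :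
    |(1 - s)⁻¹| ≤ (1 - a)⁻¹ := by
  have h : 1 - a ≤ |1 - s| := by
    linarith [abs_sub_abs_le_abs_sub 1 s, abs_one (α := ℝ)]
  rw [abs_inv]
  exact inv_anti₀ (by linarith) h

namespace Matrix

variable {n : ℕ}

theorem sum_abs_le_op1 (A : Matrix (Fin n) (Fin n) ℝ) (j : Fin n) : ∑ i, |A i j| ≤ op1 A :=
  le_ciSup (f := fun j => ∑ i, |A i j|) (Set.finite_range _).bddAbove j

theorem vecMulVec_mulVec_transpose_mulVec (P Q : Matrix (Fin n) (Fin n) ℝ) (u v : Fin n → ℝ) :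
    vecMulVec (P *ᵥ u) (Qᵀ *ᵥ v) = P * vecMulVec u v * Q := by
  rw [mul_vecMulVec, vecMulVec_mul, mulVec_transpose]

section LinftyOpNorm

attribute [local instance] Matrix.linftyOpNormedRing Matrix.linftyOpNormedAlgebra

theorem op1_eq_norm_transpose (A : Matrix (Fin n) (Fin n) ℝ) : op1 A = ‖Aᵀ‖ := by
  simp [linfty_opNorm_def, op1, Finset.sup_univ_eq_ciSup, NNReal.coe_iSup]

theorem op1_nonneg (A : Matrix (Fin n) (Fin n) ℝ) : 0 ≤ op1 A := by
  rw [op1_eq_norm_transpose]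
  exact norm_nonneg _

theorem op1_add_le (A B : Matrix (Fin n) (Fin n) ℝ) : op1 (A + B) ≤ op1 A + op1 B := by
  simp only [op1_eq_norm_transpose, transpose_add]
  exact norm_add_le _ _

theorem op1_mul_le (A B : Matrix (Fin n) (Fin n) ℝ) : op1 (A * B) ≤ op1 A * op1 B := by
  simp only [op1_eq_norm_transpose, transpose_mul]
  rw [mul_comm]
  exact norm_mul_le _ _

theorem op1_mul_mul_le (A B C : Matrix (Fin n) (Fin n) ℝ) :
    op1 (A * B * C) ≤ op1 A * op1 B * op1 C :=
  (op1_mul_le _ _).trans (mul_le_mul_of_nonneg_right (op1_mul_le _ _) (op1_nonneg C))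

theorem op1_smul (r : ℝ) (A : Matrix (Fin n) (Fin n) ℝ) : op1 (r • A) = |r| * op1 A := by
  simp only [op1_eq_norm_transpose, transpose_smul, norm_smul, Real.norm_eq_abs]

theorem op1_one_le : op1 (1 : Matrix (Fin n) (Fin n) ℝ) ≤ 1 := by
  rw [op1_eq_norm_transpose, transpose_one]
  rcases isEmpty_or_nonempty (Fin n) with h | h
  · simp [Subsingleton.elim (1 : Matrix (Fin n) (Fin n) ℝ) 0]
  · exact norm_one.le

theorem op1_one_add_le (A : Matrix (Fin n) (Fin n) ℝ) : op1 (1 + A) ≤ 1 + op1 A := by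
  linarith [op1_add_le 1 A, op1_one_le (n := n)]

theorem op1_inv_one_sub_le {N : Matrix (Fin n) (Fin n) ℝ} (hN : op1 N < 1) :
    op1 (1 - N)⁻¹ ≤ (1 - op1 N)⁻¹ := by
  have h1 : ‖(1 : Matrix (Fin n) (Fin n) ℝ)‖ ≤ 1 := by
    simpa [op1_eq_norm_transpose] using op1_one_le (n := n)
  simp only [op1_eq_norm_transpose] at hN ⊢
  rw [transpose_nonsing_inv, nonsing_inv_eq_ringInverse, transpose_sub, transpose_one]
  linarith [NormedRing.norm_inverse_one_sub_le hN]

end LinftyOpNorm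

theorem abs_dotProduct_le_op1_vecMulVec (u v : Fin n → ℝ) : |v ⬝ᵥ u| ≤ op1 (vecMulVec u v) := by
  rcases isEmpty_or_nonempty (Fin n) with h | h
  · simpa [dotProduct] using op1_nonneg (vecMulVec u v)
  obtain ⟨j, -, hj⟩ := Finset.exists_max_image Finset.univ (fun j => |v j|) Finset.univ_nonempty
  calc |v ⬝ᵥ u| ≤ ∑ i, |u i| * |v i| := by
        simpa [dotProduct, abs_mul, mul_comm] using
          Finset.abs_sum_le_sum_abs (fun i => v i * u i) Finset.univ
    _ ≤ ∑ i, |u i| * |v j| := Finset.sum_le_sum fun i _ =>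
        mul_le_mul_of_nonneg_left (hj i (Finset.mem_univ i)) (abs_nonneg _)
    _ ≤ op1 (vecMulVec u v) := by
        simpa [vecMulVec_apply, abs_mul] using sum_abs_le_op1 (vecMulVec u v) j

end Matrix

/-- Lemma 18: one step of the doubling recursion. If `α_k = ‖u_k v_kᵀ‖₁ < 1` and
`β_k = ‖c_k F_k‖₁`, then for the next iterates
`c' = c(1 - vᵀu)⁻¹c`, `u' = u + cF(I - uvᵀ)⁻¹u`, `v' = v + c(1 - vᵀu)⁻¹Fᵀv`,
`F' = F(I - uvᵀ)⁻¹F` one has `β_{k+1} ≤ (β_k/(1-α_k))²` and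
`α_{k+1} ≤ α_k(1 + β_k/(1-α_k))²`. -/
theorem stmt_14 {n : ℕ} (c : ℝ) (u v : Fin n → ℝ) (F : Matrix (Fin n) (Fin n) ℝ)
    (hα : op1 (vecMulVec u v) < 1)
    (c' : ℝ) (u' v' : Fin n → ℝ) (F' : Matrix (Fin n) (Fin n) ℝ)
    (hc' : c' = c * (1 - dotProduct v u)⁻¹ * c)
    (hu' : u' = u + (c • F).mulVec (((1 : Matrix (Fin n) (Fin n) ℝ) - vecMulVec u v)⁻¹.mulVec u))
    (hv' : v' = v + (c * (1 - dotProduct v u)⁻¹) • Fᵀ.mulVec v)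
    (hF' : F' = F * ((1 : Matrix (Fin n) (Fin n) ℝ) - vecMulVec u v)⁻¹ * F) :
    op1 (c' • F') ≤ (op1 (c • F) / (1 - op1 (vecMulVec u v))) ^ 2 ∧
    op1 (vecMulVec u' v') ≤
      op1 (vecMulVec u v) * (1 + op1 (c • F) / (1 - op1 (vecMulVec u v))) ^ 2 := by
  set N := vecMulVec u v
  set t := (1 - v ⬝ᵥ u)⁻¹
  set R := (1 - N)⁻¹
  have ha : 0 ≤ op1 N := op1_nonneg N
  have hb : 0 ≤ op1 (c • F) := op1_nonneg _
  have ht : |t| ≤ (1 - op1 N)⁻¹ := abs_inv_one_sub_le (abs_dotProduct_le_op1_vecMulVec u v) hα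
  have hR : op1 R ≤ (1 - op1 N)⁻¹ := op1_inv_one_sub_le hα
  have hCF' : c' • F' = t • (c • F * R * (c • F)) := by
    rw [hc', hF']
    simp only [smul_mul_assoc, mul_smul_comm, smul_smul]
    ring_nf
  have hN' : vecMulVec u' v' = (1 + c • F * R) * N * (1 + t • c • F) := by
    rw [← vecMulVec_mulVec_transpose_mulVec, hu', hv']
    simp only [add_mulVec, one_mulVec, mulVec_mulVec, transpose_add, transpose_one,
      transpose_smul, smul_mulVec, smul_smul, mul_comm t c]
  have hP : op1 (1 + c • F * R) ≤ 1 + op1 (c • F) * (1 - op1 N)⁻¹ :=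
    (op1_one_add_le _).trans (by gcongr; exact (op1_mul_le _ _).trans (by gcongr))
  have hQ : op1 (1 + t • c • F) ≤ 1 + (1 - op1 N)⁻¹ * op1 (c • F) := by
    refine (op1_one_add_le _).trans ?_
    rw [op1_smul]
    gcongr
  constructor
  · calc op1 (c' • F') ≤ |t| * (op1 (c • F) * op1 R * op1 (c • F)) := by
          rw [hCF', op1_smul]
          gcongr
          exact op1_mul_mul_le _ _ _
      _ ≤ (1 - op1 N)⁻¹ * (op1 (c • F) * (1 - op1 N)⁻¹ * op1 (c • F)) := by
          gcongr
          exact mul_nonneg (mul_nonneg hb (op1_nonneg R)) hb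
      _ = (op1 (c • F) / (1 - op1 N)) ^ 2 := by ring
  · calc op1 (vecMulVec u' v') ≤ op1 (1 + c • F * R) * op1 N * op1 (1 + t • c • F) := by
          rw [hN']
          exact op1_mul_mul_le _ _ _
      _ ≤ (1 + op1 (c • F) * (1 - op1 N)⁻¹) * op1 N * (1 + (1 - op1 N)⁻¹ * op1 (c • F)) := by
          gcongr
          exact op1_nonneg _
      _ = op1 N * (1 + op1 (c • F) / (1 - op1 N)) ^ 2 := by ring
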